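/- arXiv:1207.4335 — 8 statements merged into one kernel-verified Lean document; each statement's English description precedes it below -/
import Mathlib

section
/- Let θ∞ ∈ ℂ. The affine hypersurface in ℂ⁴ (coordinates a₂, c₂, t, b₀) defined by the polynomial f = a₂² + c₂t − c₂²(θ∞ + t²/4 − b₀c₂) − 1 is smooth: at every point (a₂,c₂,t,b₀) ∈ ℂ⁴ with f(a₂,c₂,t,b₀) = 0, the gradient (∂f/∂a₂, ∂f/∂c₂, ∂f/∂t, ∂f/∂b₀) is nonzero. -/
/-- The defining polynomial of the chart `ST₁` of the moduli space
`M(θ₀,θ∞)`, as a function of the coordinates `(a₂, c₂, t, b₀)`. -/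
noncomputable def ST1poly (θinf : ℂ) (a₂ c₂ t b₀ : ℂ) : ℂ :=
  a₂ ^ 2 + c₂ * t - c₂ ^ 2 * (θinf + t ^ 2 / 4 - b₀ * c₂) - 1

/-- The chart `ST₁` is nonsingular: at every point of the zero locus of
`f = a₂² + c₂t − c₂²(θ∞ + t²/4 − b₀c₂) − 1` the gradient of `f` is nonzero. -/
theorem stmt_0 (θinf : ℂ) (a₂ c₂ t b₀ : ℂ)
    (h : ST1poly θinf a₂ c₂ t b₀ = 0) :
    ¬ (deriv (fun x => ST1poly θinf x c₂ t b₀) a₂ = 0 ∧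
       deriv (fun x => ST1poly θinf a₂ x t b₀) c₂ = 0 ∧
       deriv (fun x => ST1poly θinf a₂ c₂ x b₀) t = 0 ∧
       deriv (fun x => ST1poly θinf a₂ c₂ t x) b₀ = 0) := by
  rintro ⟨h1, h2, h3, h4⟩
  have d1 : deriv (fun x => ST1poly θinf x c₂ t b₀) a₂ = 2 * a₂ := by
    have : HasDerivAt (fun x => ST1poly θinf x c₂ t b₀) (2 * a₂) a₂ := by
      unfold ST1poly
      have := (hasDerivAt_pow 2 a₂)
      simpa using ((this.add_const (c₂ * t)).sub_const (c₂ ^ 2 * (θinf + t ^ 2 / 4 - b₀ * c₂))).sub_const 1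
    exact this.deriv
  have d4 : deriv (fun x => ST1poly θinf a₂ c₂ t x) b₀ = c₂ ^ 3 := by
    have : HasDerivAt (fun x => ST1poly θinf a₂ c₂ t x) (c₂ ^ 3) b₀ := by
      unfold ST1poly
      have h0 : HasDerivAt (fun x : ℂ => a₂ ^ 2 + c₂ * t - c₂ ^ 2 * (θinf + t ^ 2 / 4 - x * c₂) - 1) (-(c₂ ^ 2 * (-(1 * c₂)))) b₀ := by
        exact ((((hasDerivAt_id b₀).mul_const c₂).const_sub (θinf + t ^ 2 / 4)).const_mul (c₂ ^ 2)).const_sub (a₂ ^ 2 + c₂ * t) |>.sub_const 1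
      convert h0 using 1
      ring
    exact this.deriv
  rw [d1] at h1
  rw [d4] at h4
  have ha : a₂ = 0 := by
    rcases mul_eq_zero.mp h1 with h'|h'
    · norm_num at h'
    · exact h'
  have hc : c₂ = 0 := by
    exact pow_eq_zero_iff (n := 3) (by norm_num) |>.mp h4
  rw [ST1poly, ha, hc] at h
  simp at h
end

section
/- Let d ∈ ℂ, let U ⊆ ℂ be open and let q : U → ℂ be complex differentiable and nowhere zero, satisfying the Riccati equation q' = −q² − (t/2)q − (d+1)/2 on U. Then for every θ₀ ∈ ℂ with (θ₀ − 1)² = (d + 1)², the function q satisfies PIV(θ₀, d) on U, i.e. q'' = (q')²/(2q) + (3/2)q³ + t q² + (q/8)(4d + t²) − (θ₀−1)²/(8q). -/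
/-!
Differentiating the Riccati equation `q' = -q² - (t/2) q - (d+1)/2` gives
`q'' = -(2q + t/2) q' - q/2`. Substituting the Riccati equation for `q'` turns PIV into an
identity of rational functions of `q` and `t`: its only pole, `1/q`, cancels because
`q'² ≡ ((d+1)/2)² mod q`, which is exactly where `(θ₀ - 1)² = (d + 1)²` enters.
-/

open Filter Topology

theorem deriv_deriv_eq_of_riccati {𝕜 : Type*} [NontriviallyNormedField 𝕜] {U : Set 𝕜}
    (hU : IsOpen U) {q : 𝕜 → 𝕜} {d t : 𝕜} (ht : t ∈ U) (hq : DifferentiableAt 𝕜 q t)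
    (hric : ∀ s ∈ U, deriv q s = -(q s) ^ 2 - (s / 2) * q s - (d + 1) / 2) :
    deriv (deriv q) t = -(2 * q t + t / 2) * deriv q t - q t / 2 := by
  have hq' := hq.hasDerivAt
  have hric_nhds : deriv q =ᶠ[𝓝 t] fun s => -(q s) ^ 2 - (s / 2) * q s - (d + 1) / 2 :=
    eventuallyEq_of_mem (hU.mem_nhds ht) hric
  have hrhs : HasDerivAt (fun s => -(q s) ^ 2 - (s / 2) * q s - (d + 1) / 2)
      (-(2 * q t * deriv q t) - ((1 / 2) * q t + (t / 2) * deriv q t)) t := by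
    have hsq : HasDerivAt (fun s => (q s) ^ 2) (2 * q t * deriv q t) t := by
      simpa [mul_comm, mul_assoc] using hq'.fun_pow 2
    have hlin : HasDerivAt (fun s => (s / 2) * q s) ((1 / 2) * q t + (t / 2) * deriv q t) t := by
      simpa using ((hasDerivAt_id t).div_const 2).fun_mul hq'
    exact (hsq.neg.sub hlin).sub_const _
  rw [hric_nhds.deriv_eq, hrhs.deriv]
  ring

theorem painleveIV_rhs_eq_of_riccati {K : Type*} [Field K] [CharZero K] {d t q p : K}
    (hq : q ≠ 0) (hp : p = -q ^ 2 - (t / 2) * q - (d + 1) / 2) :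
    -(2 * q + t / 2) * p - q / 2 =
      p ^ 2 / (2 * q) + (3 / 2) * q ^ 3 + t * q ^ 2 + (q / 8) * (4 * d + t ^ 2)
        - (d + 1) ^ 2 / (8 * q) := by
  subst hp
  field_simp
  ring

/-- A nowhere-zero solution of the Riccati equation `q' = −q² − (t/2)q − (d+1)/2`
satisfies the fourth Painlevé equation `PIV(θ₀, d)` for every `θ₀` with
`(θ₀ − 1)² = (d + 1)²`. -/
theorem stmt_5 (d : ℂ) (U : Set ℂ) (hU : IsOpen U) (q : ℂ → ℂ)
    (hq : ∀ t ∈ U, DifferentiableAt ℂ q t)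
    (hq0 : ∀ t ∈ U, q t ≠ 0)
    (hric : ∀ t ∈ U, deriv q t = -(q t) ^ 2 - (t/2) * q t - (d + 1) / 2) :
    ∀ θ₀ : ℂ, (θ₀ - 1) ^ 2 = (d + 1) ^ 2 →
      ∀ t ∈ U, deriv (deriv q) t =
        (deriv q t) ^ 2 / (2 * q t) + (3/2) * (q t) ^ 3 + t * (q t) ^ 2
          + (q t / 8) * (4 * d + t ^ 2) - (θ₀ - 1) ^ 2 / (8 * q t) := by
  intro θ₀ hθ t ht
  rw [deriv_deriv_eq_of_riccati hU ht (hq t ht) hric, hθ]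
  exact painleveIV_rhs_eq_of_riccati (hq0 t ht) (hric t ht)
end

section
/- For every a ∈ ℂ∖{0}, the matrix M(−a⁻¹, a, −a⁻¹, a) has characteristic polynomial (λ−a)²(λ−a⁻²), and the matrix M(−a⁻¹, a, −a⁻¹, a) − a·I has rank 1 (equivalently, the eigenspace of the eigenvalue a is two-dimensional). -/
/-!
At the singular point, `M - a • 1` is the rank-one matrix `u vᵀ` with `u = (0, 1, -a⁻¹)` and
`v = (1, -a, -a⁻¹)`. A scalar plus a rank-one matrix `u vᵀ` has eigenvalue `a` with multiplicity
`n - 1` and the remaining eigenvalue `a + v ⬝ u`, which here is `a - a + a⁻² = a⁻²`.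
-/

open Matrix Polynomial

/-- The Noumi–Yamada topological monodromy matrix `M(x₁,x₂,x₃,x₄)`. -/
def NYmonodromy (x₁ x₂ x₃ x₄ : ℂ) : Matrix (Fin 3) (Fin 3) ℂ :=
  !![x₄, 0, x₁ * x₄ + 1;
     1, 0, x₁;
     x₃, 1, x₁ * x₃ + x₂]

namespace Matrix

variable {m n R : Type*} [Fintype n]

theorem rank_ne_zero_of_ne_zero {K : Type*} [Field K] {A : Matrix m n K} (hA : A ≠ 0) :
    A.rank ≠ 0 := by
  rw [rank, Ne, Submodule.finrank_eq_zero, LinearMap.range_eq_bot]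
  classical
  rwa [← toLin'_apply', LinearEquiv.map_eq_zero_iff]

theorem rank_vecMulVec_of_ne_zero {K : Type*} [Field K] {u : m → K} {v : n → K}
    (hu : u ≠ 0) (hv : v ≠ 0) : (vecMulVec u v).rank = 1 := by
  refine le_antisymm (rank_vecMulVec_le u v)
    (Nat.one_le_iff_ne_zero.2 (rank_ne_zero_of_ne_zero fun h => ?_))
  obtain ⟨i, hi⟩ := Function.ne_iff.mp hu
  obtain ⟨j, hj⟩ := Function.ne_iff.mp hv
  exact mul_ne_zero hi hj congr($h i j)

theorem charpoly_smul_one_add_vecMulVec [DecidableEq n] [Nonempty n] [CommRing R]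
    (μ : R) (u v : n → R) :
    (μ • 1 + vecMulVec u v).charpoly =
      (X - C μ) ^ (Fintype.card n - 1) * (X - C (μ + u ⬝ᵥ v)) := by
  have h := charpoly_sub_scalar (μ • 1 + vecMulVec u v) μ
  rw [scalar_apply, ← smul_one_eq_diagonal, add_sub_cancel_left, charpoly_vecMulVec] at h
  have hcomp := congrArg (fun p => p.comp (X - C μ)) h
  simp only [comp_assoc, add_comp, X_comp, C_comp, sub_add_cancel, comp_X] at hcomp
  obtain ⟨k, hk⟩ := Nat.exists_eq_add_one_of_ne_zero (Fintype.card_ne_zero (α := n))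
  rw [← hcomp, hk, Nat.add_sub_cancel]
  simp only [sub_comp, pow_comp, X_comp, smul_eq_C_mul, mul_comp, C_comp, C_add]
  ring

end Matrix

theorem NYmonodromy_singular_eq_smul_one_add_vecMulVec {a : ℂ} (ha : a ≠ 0) :
    NYmonodromy (-a⁻¹) a (-a⁻¹) a = a • 1 + vecMulVec ![0, 1, -a⁻¹] ![1, -a, -a⁻¹] := by
  ext i j
  fin_cases i <;> fin_cases j <;>
    simp [NYmonodromy, one_apply, inv_mul_cancel₀ ha, add_comm]

/-- For `a ≠ 0`, the matrix `M(−a⁻¹, a, −a⁻¹, a)` has characteristic polynomial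
`(λ−a)²(λ−a⁻²)` and `M(−a⁻¹, a, −a⁻¹, a) − a·I` has rank `1` (the eigenspace of
the eigenvalue `a` is two-dimensional). -/
theorem stmt_9 (a : ℂ) (ha : a ≠ 0) :
    (NYmonodromy (-a⁻¹) a (-a⁻¹) a).charpoly = (X - C a) ^ 2 * (X - C ((a ^ 2)⁻¹)) ∧
    (NYmonodromy (-a⁻¹) a (-a⁻¹) a - a • (1 : Matrix (Fin 3) (Fin 3) ℂ)).rank = 1 := by
  rw [NYmonodromy_singular_eq_smul_one_add_vecMulVec ha, charpoly_smul_one_add_vecMulVec,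
    add_sub_cancel_left]
  refine ⟨?_, rank_vecMulVec_of_ne_zero (fun h => one_ne_zero (congrFun h 1))
    (fun h => one_ne_zero (congrFun h 0))⟩
  have eigenvalue : a + ![0, 1, -a⁻¹] ⬝ᵥ ![1, -a, -a⁻¹] = (a ^ 2)⁻¹ := by
    simp [dotProduct, Fin.sum_univ_three, sq]
  rw [eigenvalue, Fintype.card_fin]
end

section
/- Let a ∈ ℂ∖{0} and let x = (x₁,x₂,x₃,x₄) ∈ ℂ⁴ be such that a is an eigenvalue of M(x), i.e. det(M(x) − a·I) = 0. Then M(x) − a·I has rank 1 if and only if x = (−a⁻¹, a, −a⁻¹, a); otherwise M(x) − a·I has rank 2. -/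
open Matrix

/-!
Write `A = M(x) − a·I`. Its entry in position `(1,0)` is `1`, so `rank A ≥ 1`, and `det A = 0`
gives `rank A ≤ 2`. Four `2 × 2` minors of `A` equal `−a(x₄ − a)`, `1 + a x₃`, `a(x₁x₄ + 1)` and
`−a(x₁x₃ + x₂ − a) − x₁`; they vanish simultaneously exactly at `x = (−a⁻¹, a, −a⁻¹, a)`, where
`A` is the rank-one matrix `(0, 1, −a⁻¹)ᵀ (1, −a, −a⁻¹)`.
-/

namespace Matrix

variable {K m n : Type*} [Field K]

theorem rank_lt_card_of_det_eq_zero [Fintype n] [DecidableEq n] {A : Matrix n n K}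
    (h : A.det = 0) : A.rank < Fintype.card n := by
  refine A.rank_le_card_width.lt_of_ne fun hrank => ?_
  have hsurj : Function.Surjective A.mulVecLin :=
    LinearMap.range_eq_top.mp (Submodule.eq_top_of_finrank_eq (by simpa [rank] using hrank))
  simpa [isUnit_iff_isUnit_det, h] using mulVec_surjective_iff_isUnit.mp hsurj

theorem le_rank_of_det_submatrix_ne_zero [Fintype n] {k : ℕ} {A : Matrix m n K}
    (r : Fin k → m) (c : Fin k → n) (h : (A.submatrix r c).det ≠ 0) : k ≤ A.rank := by
  simpa [rank_of_det_ne_zero h] using A.rank_submatrix_le r c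

end Matrix

section NYmonodromy

variable {a x₁ x₂ x₃ x₄ : ℂ}

theorem NYmonodromy_sub_smul_one :
    NYmonodromy x₁ x₂ x₃ x₄ - a • (1 : Matrix (Fin 3) (Fin 3) ℂ) =
      !![x₄ - a, 0, x₁ * x₄ + 1; 1, -a, x₁; x₃, 1, x₁ * x₃ + x₂ - a] := by
  ext i j
  fin_cases i <;> fin_cases j <;> simp [NYmonodromy, one_apply]

theorem two_le_rank_NYmonodromy_sub_smul_one (ha : a ≠ 0)
    (hx : (x₁, x₂, x₃, x₄) ≠ (-a⁻¹, a, -a⁻¹, a)) :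
    2 ≤ (NYmonodromy x₁ x₂ x₃ x₄ - a • (1 : Matrix (Fin 3) (Fin 3) ℂ)).rank := by
  rw [NYmonodromy_sub_smul_one]
  by_contra! hlt
  have minor (i j k l : Fin 3) :
      (!![x₄ - a, 0, x₁ * x₄ + 1; 1, -a, x₁; x₃, 1, x₁ * x₃ + x₂ - a].submatrix
        ![i, j] ![k, l]).det = 0 := by
    by_contra hne
    exact hlt.not_ge (le_rank_of_det_submatrix_ne_zero _ _ hne)
  have h₁ := minor 0 1 0 1
  have h₂ := minor 1 2 0 1
  have h₃ := minor 0 1 1 2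
  have h₄ := minor 1 2 1 2
  simp only [det_fin_two, submatrix_apply, cons_val_zero, cons_val_one, of_apply, cons_val',
    cons_val, empty_val', cons_val_fin_one] at h₁ h₂ h₃ h₄
  have hx₄ : x₄ = a := mul_left_cancel₀ ha (by linear_combination -h₁)
  subst x₄
  have hx₃ : x₃ = -a⁻¹ := by field_simp; linear_combination h₂
  have hx₁ : x₁ = -a⁻¹ := by
    field_simp
    exact mul_left_cancel₀ ha (by linear_combination h₃)
  subst x₁ x₃
  field_simp at h₄
  have hx₂ : x₂ = a := mul_left_cancel₀ (pow_ne_zero 2 ha) (by linear_combination -h₄)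
  exact hx (by rw [hx₂])

theorem rank_NYmonodromy_sub_smul_one_of_eq (ha : a ≠ 0) :
    (NYmonodromy (-a⁻¹) a (-a⁻¹) a - a • (1 : Matrix (Fin 3) (Fin 3) ℂ)).rank = 1 := by
  have hA : NYmonodromy (-a⁻¹) a (-a⁻¹) a - a • (1 : Matrix (Fin 3) (Fin 3) ℂ) =
      vecMulVec ![0, 1, -a⁻¹] ![1, -a, -a⁻¹] := by
    rw [NYmonodromy_sub_smul_one]
    ext i j
    fin_cases i <;> fin_cases j <;> simp [vecMulVec, ha]
  refine le_antisymm (hA ▸ rank_vecMulVec_le _ _) (le_rank_of_det_submatrix_ne_zero ![1] ![0] ?_)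
  rw [det_fin_one]
  simp [NYmonodromy]

end NYmonodromy

/-- If `a ≠ 0` is an eigenvalue of `M(x)`, then `M(x) − a·I` has rank `1` iff
`x = (−a⁻¹, a, −a⁻¹, a)`; otherwise `M(x) − a·I` has rank `2`. -/
theorem stmt_10 (a : ℂ) (ha : a ≠ 0) (x₁ x₂ x₃ x₄ : ℂ)
    (heig : (NYmonodromy x₁ x₂ x₃ x₄ - a • (1 : Matrix (Fin 3) (Fin 3) ℂ)).det = 0) :
    ((NYmonodromy x₁ x₂ x₃ x₄ - a • (1 : Matrix (Fin 3) (Fin 3) ℂ)).rank = 1 ↔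
      (x₁, x₂, x₃, x₄) = (-a⁻¹, a, -a⁻¹, a)) ∧
    ((x₁, x₂, x₃, x₄) ≠ (-a⁻¹, a, -a⁻¹, a) →
      (NYmonodromy x₁ x₂ x₃ x₄ - a • (1 : Matrix (Fin 3) (Fin 3) ℂ)).rank = 2) := by
  have hle : (NYmonodromy x₁ x₂ x₃ x₄ - a • (1 : Matrix (Fin 3) (Fin 3) ℂ)).rank ≤ 2 :=
    Nat.le_of_lt_succ (by simpa using rank_lt_card_of_det_eq_zero heig)
  have hrank_two (hx : (x₁, x₂, x₃, x₄) ≠ (-a⁻¹, a, -a⁻¹, a)) :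
      (NYmonodromy x₁ x₂ x₃ x₄ - a • (1 : Matrix (Fin 3) (Fin 3) ℂ)).rank = 2 :=
    le_antisymm hle (two_le_rank_NYmonodromy_sub_smul_one ha hx)
  refine ⟨⟨fun hone => ?_, fun hx => ?_⟩, hrank_two⟩
  · by_contra hx
    exact absurd (hone.symm.trans (hrank_two hx)) (by decide)
  · simp only [Prod.mk.injEq] at hx
    obtain ⟨rfl, rfl, rfl, rfl⟩ := hx
    exact rank_NYmonodromy_sub_smul_one_of_eq ha
end

section
/- Define e₁, e₂ : ℂ⁴ → ℂ by e₁(x₁,x₂,x₃,x₄) = x₂ + x₄ + x₁x₃ and e₂(x₁,x₂,x₃,x₄) = −x₁ − x₃ + x₂x₄. The gradients ∇e₁(x) = (x₃, 1, x₁, 1) and ∇e₂(x) = (−1, x₄, −1, x₂) are linearly dependent at x ∈ ℂ⁴ if and only if x = (−a⁻¹, a, −a⁻¹, a) for some a ∈ ℂ∖{0}; at such a point the characteristic polynomial of M(x) has the repeated root a. Consequently, if the characteristic polynomial of M(x) has three distinct roots, the differential of (e₁,e₂) at x is surjective. -/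
open Matrix Polynomial

/-- `e₁(x₁,x₂,x₃,x₄) = x₂ + x₄ + x₁x₃`. -/
def NYe₁ (x : Fin 4 → ℂ) : ℂ := x 1 + x 3 + x 0 * x 2

/-- `e₂(x₁,x₂,x₃,x₄) = −x₁ − x₃ + x₂x₄`. -/
def NYe₂ (x : Fin 4 → ℂ) : ℂ := -(x 0) - x 2 + x 1 * x 3

theorem Polynomial.not_sq_dvd_multiset_prod_X_sub_C {R : Type*} [CommRing R] [IsDomain R]
    {s : Multiset R} (hs : s.Nodup) (a : R) :
    ¬ (X - C a) ^ 2 ∣ (s.map fun r => X - C r).prod := by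
  classical
  intro h
  have hne : (s.map fun r => X - C r).prod ≠ 0 :=
    (monic_multiset_prod_of_monic _ _ fun r _ => monic_X_sub_C r).ne_zero
  have h2 := (le_rootMultiplicity_iff hne).2 h
  rw [← count_roots, roots_multiset_prod_X_sub_C] at h2
  have h1 := Multiset.nodup_iff_count_le_one.1 hs a
  omega

theorem Polynomial.not_sq_dvd_X_sub_C_mul_X_sub_C_mul_X_sub_C {R : Type*} [CommRing R]
    [IsDomain R] {r s u : R} (hrs : r ≠ s) (hru : r ≠ u) (hsu : s ≠ u) (a : R) :
    ¬ (X - C a) ^ 2 ∣ (X - C r) * (X - C s) * (X - C u) := by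
  have hnodup : ({r, s, u} : Multiset R).Nodup := by simp [hrs, hru, hsu]
  simpa [mul_assoc] using not_sq_dvd_multiset_prod_X_sub_C hnodup a

theorem linearIndependent_pair_iff_not_exists {R M : Type*} [Ring R] [AddCommGroup M]
    [Module R M] {x y : M} :
    LinearIndependent R ![x, y] ↔ ¬ ∃ s t : R, (s, t) ≠ (0, 0) ∧ s • x + t • y = 0 := by
  simp only [LinearIndependent.pair_iff, ne_eq, Prod.mk.injEq, not_exists, not_and]
  exact forall₂_congr fun s t => by tauto

theorem surjective_dotProduct_prod_of_linearIndependent {K n : Type*} [Field K] [Fintype n]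
    [DecidableEq n] {u v : n → K} (h : LinearIndependent K ![u, v]) :
    Function.Surjective fun w => (u ⬝ᵥ w, v ⬝ᵥ w) := by
  let f := (dotProductEquiv K n u).prod (dotProductEquiv K n v)
  refine LinearMap.dualMap_injective_iff (f := f).1 <|
    (injective_iff_map_eq_zero _).2 fun φ hφ => ?_
  have hcomb : φ (1, 0) • u + φ (0, 1) • v = 0 := by
    refine dotProduct_eq_zero _ fun w => ?_
    have hpair : (u ⬝ᵥ w, v ⬝ᵥ w) =
        (u ⬝ᵥ w) • ((1 : K), (0 : K)) + (v ⬝ᵥ w) • ((0 : K), (1 : K)) := by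
      simp
    have hw : φ (u ⬝ᵥ w, v ⬝ᵥ w) = 0 := LinearMap.congr_fun hφ w
    rw [hpair, map_add, map_smul, map_smul] at hw
    simpa [add_dotProduct, mul_comm] using hw
  obtain ⟨hc, hd⟩ := LinearIndependent.pair_iff.1 h _ _ hcomb
  refine LinearMap.prod_ext (LinearMap.ext_ring ?_) (LinearMap.ext_ring ?_)
  · simpa using hc
  · simpa using hd

theorem charpoly_NYmonodromy (x₁ x₂ x₃ x₄ : ℂ) :
    (NYmonodromy x₁ x₂ x₃ x₄).charpoly =
      X ^ 3 - C (NYe₁ ![x₁, x₂, x₃, x₄]) * X ^ 2 + C (NYe₂ ![x₁, x₂, x₃, x₄]) * X - 1 := by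
  simp only [charpoly, det_fin_three, charmatrix_apply, NYmonodromy, NYe₁, NYe₂, of_apply,
    cons_val', cons_val, cons_val_fin_one, diagonal_apply, Fin.reduceEq, if_true, if_false,
    map_add, map_mul, map_sub, map_neg, map_zero, map_one]
  ring

theorem hasFDerivAt_NYe (x₁ x₂ x₃ x₄ : ℂ) :
    HasFDerivAt (fun x : Fin 4 → ℂ => (NYe₁ x, NYe₂ x))
      ((dotProductEquiv ℂ (Fin 4) ![x₃, 1, x₁, 1]).toContinuousLinearMap.prod
        (dotProductEquiv ℂ (Fin 4) ![-1, x₄, -1, x₂]).toContinuousLinearMap)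
      ![x₁, x₂, x₃, x₄] := by
  have hp (i : Fin 4) := hasFDerivAt_apply (𝕜 := ℂ) i ![x₁, x₂, x₃, x₄]
  refine HasFDerivAt.prodMk ?_ ?_
  · refine (((hp 1).add (hp 3)).add ((hp 0).mul (hp 2))).congr_fderiv ?_
    ext w
    simp only [_root_.add_apply, _root_.smul_apply, ContinuousLinearMap.proj_apply, smul_eq_mul,
      LinearMap.coe_toContinuousLinearMap', dotProductEquiv_apply_apply, dotProduct,
      Fin.sum_univ_four, cons_val]
    ring
  · refine (((hp 0).neg.sub (hp 2)).add ((hp 1).mul (hp 3))).congr_fderiv ?_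
    ext w
    simp only [_root_.add_apply, _root_.sub_apply, _root_.neg_apply, _root_.smul_apply,
      ContinuousLinearMap.proj_apply, smul_eq_mul, LinearMap.coe_toContinuousLinearMap', dotProductEquiv_apply_apply, dotProduct,
      Fin.sum_univ_four, cons_val]
    ring

theorem charpoly_NYmonodromy_of_ne_zero {a : ℂ} (ha : a ≠ 0) :
    (NYmonodromy (-a⁻¹) a (-a⁻¹) a).charpoly = (X - C a) ^ 2 * (X - C (a⁻¹ ^ 2)) := by
  have hC : C a * C a⁻¹ = (1 : ℂ[X]) := by rw [← C_mul, mul_inv_cancel₀ ha, C_1]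
  rw [charpoly_NYmonodromy]
  simp only [NYe₁, NYe₂, Matrix.cons_val, map_add, map_sub, map_neg, map_mul, map_pow]
  linear_combination (C a * C a⁻¹ + 1 - 2 * X * C a⁻¹) * hC

theorem gradients_NYe_dependent_iff (x₁ x₂ x₃ x₄ : ℂ) :
    (∃ c d : ℂ, (c, d) ≠ (0, 0) ∧
        c • (![x₃, 1, x₁, 1] : Fin 4 → ℂ) + d • (![-1, x₄, -1, x₂] : Fin 4 → ℂ) = 0) ↔
      (∃ a : ℂ, a ≠ 0 ∧ (x₁, x₂, x₃, x₄) = (-a⁻¹, a, -a⁻¹, a)) := by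
  simp only [funext_iff, Fin.forall_fin_succ, Prod.mk.injEq, ne_eq, not_and, smul_cons,
    smul_eq_mul, mul_one, smul_empty, mul_neg, Pi.add_apply, Pi.zero_apply, cons_val,
    Fin.reduceSucc, IsEmpty.forall_iff, and_true, existsAndEq, true_and]
  constructor
  · rintro ⟨c, d, hcd, h₀, h₁, h₂, h₃⟩
    have hd : d ≠ 0 := fun hd => hcd (by simpa [hd] using h₃) hd
    obtain rfl : c = -(d * x₂) := by linear_combination h₃
    have hx₂ : x₂ ≠ 0 := by
      rintro rfl
      exact hd (by linear_combination -h₀)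
    have hx₁ : x₁ * x₂ = -1 := mul_left_cancel₀ hd (by linear_combination -h₂)
    have hx₃ : x₃ * x₂ = -1 := mul_left_cancel₀ hd (by linear_combination -h₀)
    refine ⟨hx₂, ?_, ?_, mul_left_cancel₀ hd (by linear_combination h₁)⟩
    · field_simp
      linear_combination hx₁
    · field_simp
      linear_combination hx₃
  · rintro ⟨hx₂, rfl, rfl, h₄⟩
    subst x₄
    refine ⟨x₂, -1, by simp, ?_, ?_, ?_, ?_⟩ <;> field_simp <;> ring

/-- The gradients `∇e₁ = (x₃,1,x₁,1)` and `∇e₂ = (−1,x₄,−1,x₂)` are linearly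
dependent iff `x = (−a⁻¹, a, −a⁻¹, a)` for some `a ≠ 0`; at such a point the
characteristic polynomial of `M(x)` has the repeated root `a`; consequently, if
the characteristic polynomial of `M(x)` has three distinct roots, the
differential of `(e₁,e₂)` at `x` is surjective. -/
theorem stmt_11 (x₁ x₂ x₃ x₄ : ℂ) :
    ((∃ c d : ℂ, (c, d) ≠ (0, 0) ∧
        c • (![x₃, 1, x₁, 1] : Fin 4 → ℂ) + d • (![-1, x₄, -1, x₂] : Fin 4 → ℂ) = 0) ↔
      (∃ a : ℂ, a ≠ 0 ∧ (x₁, x₂, x₃, x₄) = (-a⁻¹, a, -a⁻¹, a))) ∧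
    (∀ a : ℂ, a ≠ 0 → (x₁, x₂, x₃, x₄) = (-a⁻¹, a, -a⁻¹, a) →
      (X - C a) ^ 2 ∣ (NYmonodromy x₁ x₂ x₃ x₄).charpoly) ∧
    ((∃ r s u : ℂ, r ≠ s ∧ r ≠ u ∧ s ≠ u ∧
        (NYmonodromy x₁ x₂ x₃ x₄).charpoly = (X - C r) * (X - C s) * (X - C u)) →
      Function.Surjective
        (fderiv ℂ (fun x : Fin 4 → ℂ => (NYe₁ x, NYe₂ x)) ![x₁, x₂, x₃, x₄])) := by
  have hrepeated : ∀ a : ℂ, a ≠ 0 → (x₁, x₂, x₃, x₄) = (-a⁻¹, a, -a⁻¹, a) →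
      (X - C a) ^ 2 ∣ (NYmonodromy x₁ x₂ x₃ x₄).charpoly := by
    rintro a ha ⟨⟩
    exact ⟨_, charpoly_NYmonodromy_of_ne_zero ha⟩
  refine ⟨gradients_NYe_dependent_iff x₁ x₂ x₃ x₄, hrepeated, ?_⟩
  rintro ⟨r, s, u, hrs, hru, hsu, hfac⟩
  rw [(hasFDerivAt_NYe x₁ x₂ x₃ x₄).fderiv]
  refine surjective_dotProduct_prod_of_linearIndependent
    (linearIndependent_pair_iff_not_exists.2 ?_)
  rw [gradients_NYe_dependent_iff]
  rintro ⟨a, ha, hx⟩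
  exact not_sq_dvd_X_sub_C_mul_X_sub_C_mul_X_sub_C hrs hru hsu a (hfac ▸ hrepeated a ha hx)
end

section
/- Let α₀, α₁, α₂ ∈ ℂ, let U ⊆ ℂ be a nonempty open set, and let f₀, f₁, f₂ : U → ℂ be holomorphic functions satisfying the symmetric PIV system with constants (α₀,α₁,α₂), with f₁ nowhere zero on U. Then f₁ is twice differentiable and satisfies on U the second-order equation f₁'' = (f₁')²/(2f₁) + (3/2)f₁³ − 2t f₁² + (t²/2 + (α₂ − α₀)) f₁ − α₁²/(2f₁). -/
/-! Differentiating `f₁' = f₁ (f₂ - f₀) + α₁` and substituting the system gives `f₁''` as a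
polynomial in `f₀, f₁, f₂, t`. Eliminating `f₀` through `f₀ + f₁ + f₂ = t` and `f₂` through
`f₂ - f₀ = (f₁' - α₁) / f₁` turns it into the stated Painlevé IV form; the only division is by
`2 f₁`, which arises from `f₁'² - α₁² = (f₁' - α₁)(f₁' + α₁)`. -/

open Filter Topology

theorem symmetricPIV_second_order_identity {α₀ α₁ α₂ t f₀ f₁ f₂ : ℂ}
    (hsum : f₀ + f₁ + f₂ = t) (hf₁ : f₁ ≠ 0) :
    (f₁ * (f₂ - f₀) + α₁) * (f₂ - f₀)
        + f₁ * ((f₂ * (f₀ - f₁) + α₂) - (f₀ * (f₁ - f₂) + α₀)) =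
      (f₁ * (f₂ - f₀) + α₁) ^ 2 / (2 * f₁) + (3/2) * f₁ ^ 3 - 2 * t * f₁ ^ 2
        + (t ^ 2 / 2 + (α₂ - α₀)) * f₁ - α₁ ^ 2 / (2 * f₁) := by
  subst hsum
  field_simp
  ring

theorem stmt_12_general (α₀ α₁ α₂ : ℂ) (U : Set ℂ) (hU : IsOpen U)
    (f₀ f₁ f₂ : ℂ → ℂ)
    (hf₀ : ∀ t ∈ U, DifferentiableAt ℂ f₀ t)
    (hf₁ : ∀ t ∈ U, DifferentiableAt ℂ f₁ t)
    (hf₂ : ∀ t ∈ U, DifferentiableAt ℂ f₂ t)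
    (hsum : ∀ t ∈ U, f₀ t + f₁ t + f₂ t = t)
    (heq₀ : ∀ t ∈ U, deriv f₀ t = f₀ t * (f₁ t - f₂ t) + α₀)
    (heq₁ : ∀ t ∈ U, deriv f₁ t = f₁ t * (f₂ t - f₀ t) + α₁)
    (heq₂ : ∀ t ∈ U, deriv f₂ t = f₂ t * (f₀ t - f₁ t) + α₂)
    (hnz : ∀ t ∈ U, f₁ t ≠ 0) :
    ∀ t ∈ U, DifferentiableAt ℂ (deriv f₁) t ∧
      deriv (deriv f₁) t =
        (deriv f₁ t) ^ 2 / (2 * f₁ t) + (3/2) * (f₁ t) ^ 3 - 2 * t * (f₁ t) ^ 2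
          + (t ^ 2 / 2 + (α₂ - α₀)) * f₁ t - α₁ ^ 2 / (2 * f₁ t) := by
  intro t ht
  have hderiv₁ : deriv f₁ =ᶠ[𝓝 t] fun x => f₁ x * (f₂ x - f₀ x) + α₁ :=
    eventuallyEq_of_mem (hU.mem_nhds ht) heq₁
  have hsecond : HasDerivAt (deriv f₁)
      (deriv f₁ t * (f₂ t - f₀ t) + f₁ t * (deriv f₂ t - deriv f₀ t)) t :=
    (((hf₁ t ht).hasDerivAt.mul ((hf₂ t ht).hasDerivAt.sub (hf₀ t ht).hasDerivAt)).add_const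
      α₁).congr_of_eventuallyEq hderiv₁
  refine ⟨hsecond.differentiableAt, ?_⟩
  rw [hsecond.deriv, heq₀ t ht, heq₁ t ht, heq₂ t ht]
  exact symmetricPIV_second_order_identity (hsum t ht) (hnz t ht)

/-- If holomorphic `f₀,f₁,f₂` satisfy the symmetric PIV system with constants
`(α₀,α₁,α₂)` on a nonempty open set `U` and `f₁` is nowhere zero, then `f₁` is
twice differentiable and satisfies
`f₁'' = (f₁')²/(2f₁) + (3/2)f₁³ − 2t f₁² + (t²/2 + (α₂ − α₀)) f₁ − α₁²/(2f₁)` on `U`. -/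
theorem stmt_12 (α₀ α₁ α₂ : ℂ) (U : Set ℂ) (hU : IsOpen U) (hne : U.Nonempty)
    (f₀ f₁ f₂ : ℂ → ℂ)
    (hf₀ : ∀ t ∈ U, DifferentiableAt ℂ f₀ t)
    (hf₁ : ∀ t ∈ U, DifferentiableAt ℂ f₁ t)
    (hf₂ : ∀ t ∈ U, DifferentiableAt ℂ f₂ t)
    (hsum : ∀ t ∈ U, f₀ t + f₁ t + f₂ t = t)
    (heq₀ : ∀ t ∈ U, deriv f₀ t = f₀ t * (f₁ t - f₂ t) + α₀)
    (heq₁ : ∀ t ∈ U, deriv f₁ t = f₁ t * (f₂ t - f₀ t) + α₁)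
    (heq₂ : ∀ t ∈ U, deriv f₂ t = f₂ t * (f₀ t - f₁ t) + α₂)
    (hnz : ∀ t ∈ U, f₁ t ≠ 0) :
    ∀ t ∈ U, DifferentiableAt ℂ (deriv f₁) t ∧
      deriv (deriv f₁) t =
        (deriv f₁ t) ^ 2 / (2 * f₁ t) + (3/2) * (f₁ t) ^ 3 - 2 * t * (f₁ t) ^ 2
          + (t ^ 2 / 2 + (α₂ - α₀)) * f₁ t - α₁ ^ 2 / (2 * f₁ t) :=
  stmt_12_general α₀ α₁ α₂ U hU f₀ f₁ f₂ hf₀ hf₁ hf₂ hsum heq₀ heq₁ heq₂ hnz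
end

section
/- Let U ⊆ ℂ be open and let ε₁, ε₂, ε₃, f₀, f₁, f₂, q₁, q₂, q₃ : U → ℂ be complex differentiable functions of t. Define A(t,z) = ((ε₁, f₁, 1), (z, ε₂, f₂), (f₀z, z, ε₃)) and B(t,z) = ((−q₁, 1, 0), (0, −q₂, 1), (z, 0, −q₃)). Then the Lax equation ∂A/∂t (t,z) = z·∂B/∂z (t,z) + A(t,z)B(t,z) − B(t,z)A(t,z) holds for all t ∈ U and all z ∈ ℂ if and only if on U: ε₁' = ε₂' = ε₃' = 0, f₁ − f₂ = −q₁ + q₃, f₂ − f₀ = q₁ − q₂, f₀ − f₁ = q₂ − q₃, f₀' = f₀(f₁−f₂) + (1 − ε₁ + ε₃), f₁' = f₁(f₂−f₀) + (ε₁ − ε₂), and f₂' = f₂(f₀−f₁) + (ε₂ − ε₃). -/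
open Matrix

/-- The Noumi–Yamada matrix `A(t,z)`. -/
noncomputable def NYA (ε₁ ε₂ ε₃ f₀ f₁ f₂ : ℂ → ℂ) (t z : ℂ) : Matrix (Fin 3) (Fin 3) ℂ :=
  !![ε₁ t, f₁ t, 1;
     z, ε₂ t, f₂ t;
     f₀ t * z, z, ε₃ t]

/-- The Noumi–Yamada matrix `B(t,z)`. -/
noncomputable def NYB (q₁ q₂ q₃ : ℂ → ℂ) (t z : ℂ) : Matrix (Fin 3) (Fin 3) ℂ :=
  !![-q₁ t, 1, 0;
     0, -q₂ t, 1;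
     z, 0, -q₃ t]

/-- The Lax equation `∂A/∂t = z·∂B/∂z + [A,B]` for the Noumi–Yamada `3×3` pair
holds for all `t ∈ U`, `z ∈ ℂ` if and only if the symmetric PIV equations hold
on `U`. -/
theorem stmt_16 (U : Set ℂ) (hU : IsOpen U)
    (ε₁ ε₂ ε₃ f₀ f₁ f₂ q₁ q₂ q₃ : ℂ → ℂ)
    (hε₁ : ∀ t ∈ U, DifferentiableAt ℂ ε₁ t)
    (hε₂ : ∀ t ∈ U, DifferentiableAt ℂ ε₂ t)
    (hε₃ : ∀ t ∈ U, DifferentiableAt ℂ ε₃ t)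
    (hf₀ : ∀ t ∈ U, DifferentiableAt ℂ f₀ t)
    (hf₁ : ∀ t ∈ U, DifferentiableAt ℂ f₁ t)
    (hf₂ : ∀ t ∈ U, DifferentiableAt ℂ f₂ t)
    (hq₁ : ∀ t ∈ U, DifferentiableAt ℂ q₁ t)
    (hq₂ : ∀ t ∈ U, DifferentiableAt ℂ q₂ t)
    (hq₃ : ∀ t ∈ U, DifferentiableAt ℂ q₃ t) :
    (∀ t ∈ U, ∀ z : ℂ, ∀ i j : Fin 3,
        deriv (fun s => NYA ε₁ ε₂ ε₃ f₀ f₁ f₂ s z i j) t =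
          z * deriv (fun w => NYB q₁ q₂ q₃ t w i j) z +
            (NYA ε₁ ε₂ ε₃ f₀ f₁ f₂ t z * NYB q₁ q₂ q₃ t z
              - NYB q₁ q₂ q₃ t z * NYA ε₁ ε₂ ε₃ f₀ f₁ f₂ t z) i j) ↔
    (∀ t ∈ U,
        deriv ε₁ t = 0 ∧ deriv ε₂ t = 0 ∧ deriv ε₃ t = 0 ∧
        f₁ t - f₂ t = -q₁ t + q₃ t ∧
        f₂ t - f₀ t = q₁ t - q₂ t ∧
        f₀ t - f₁ t = q₂ t - q₃ t ∧
        deriv f₀ t = f₀ t * (f₁ t - f₂ t) + (1 - ε₁ t + ε₃ t) ∧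
        deriv f₁ t = f₁ t * (f₂ t - f₀ t) + (ε₁ t - ε₂ t) ∧
        deriv f₂ t = f₂ t * (f₀ t - f₁ t) + (ε₂ t - ε₃ t)) := by
  constructor
  · intro H t ht
    have h00 := H t ht 1 0 0
    have h01 := H t ht 1 0 1
    have h02 := H t ht 1 0 2
    have h10 := H t ht 1 1 0
    have h11 := H t ht 1 1 1
    have h12 := H t ht 1 1 2
    have h20 := H t ht 1 2 0
    have h21 := H t ht 1 2 1
    have h22 := H t ht 1 2 2
    simp [NYA, NYB, Matrix.mul_apply, Fin.sum_univ_three] at h00 h01 h02 h10 h11 h12 h20 h21 h22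
    refine ⟨by linear_combination h00, by linear_combination h11, by linear_combination h22,
      by linear_combination -h02, by linear_combination -h10, by linear_combination -h21,
      by linear_combination h20 + f₀ t * h02, by linear_combination h01 + f₁ t * h10,
      by linear_combination h12 + f₂ t * h21⟩
  · intro H t ht z i j
    obtain ⟨h1, h2, h3, h4, h5, h6, h7, h8, h9⟩ := H t ht
    have d0 : deriv (fun s => f₀ s * z) t = deriv f₀ t * z := deriv_mul_const (hf₀ t ht) z
    fin_cases i <;> fin_cases j <;>
      simp [NYA, NYB, Matrix.mul_apply, Fin.sum_univ_three, d0]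
    · linear_combination h1
    · linear_combination h8 + f₁ t * h5
    · linear_combination -h4
    · linear_combination -z * h5
    · linear_combination h2
    · linear_combination h9 + f₂ t * h6
    · linear_combination z * h7 + z * f₀ t * h4
    · linear_combination -z * h6
    · linear_combination h3
end

section
/- Let α₀, α₁, α₂ ∈ ℂ, let U ⊆ ℂ be a nonempty open set, and let f₀, f₁, f₂ : U → ℂ be holomorphic functions satisfying the symmetric PIV system with constants (α₀,α₁,α₂), with f₂ nowhere zero on U. Then f₂ satisfies on U the second-order equation f₂'' = (f₂')²/(2f₂) + (3/2)f₂³ − 2t f₂² + (t²/2 + (α₀ − α₁)) f₂ − α₂²/(2f₂). -/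
/-! Differentiating `f₂' = f₂ (f₀ - f₁) + α₂` once more and substituting the system for
`f₀'`, `f₁'`, `f₂'` expresses `f₂''` polynomially in `f₀, f₂, t`. Eliminating `f₁` through
`f₀ + f₁ + f₂ = t` and `f₀` through `f₂ (f₀ - f₁) = f₂' - α₂` (possible as `f₂ ≠ 0`) leaves
the PIV equation in `f₂`. -/

theorem deriv_deriv_of_eventuallyEq_mul_add_const {𝕜 : Type*} [NontriviallyNormedField 𝕜]
    {f g : 𝕜 → 𝕜} {c t : 𝕜} (hfg : deriv f =ᶠ[nhds t] fun s => f s * g s + c)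
    (hf : DifferentiableAt 𝕜 f t) (hg : DifferentiableAt 𝕜 g t) :
    deriv (deriv f) t = deriv f t * g t + f t * deriv g t := by
  rw [hfg.deriv_eq, deriv_add_const, deriv_fun_mul hf hg]

theorem symmetricPIV_second_deriv_identity {K : Type*} [Field K] [NeZero (2 : K)]
    (α₀ α₁ α₂ a b c t : K) (hsum : a + b + c = t) (hc : c ≠ 0) :
    (c * (a - b) + α₂) * (a - b) + c * ((a * (b - c) + α₀) - (b * (c - a) + α₁)) =
      (c * (a - b) + α₂) ^ 2 / (2 * c) + (3/2) * c ^ 3 - 2 * t * c ^ 2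
        + (t ^ 2 / 2 + (α₀ - α₁)) * c - α₂ ^ 2 / (2 * c) := by
  subst hsum
  field_simp
  ring

theorem stmt_17_general (α₀ α₁ α₂ : ℂ) (U : Set ℂ) (hU : IsOpen U)
    (f₀ f₁ f₂ : ℂ → ℂ)
    (hf₀ : ∀ t ∈ U, DifferentiableAt ℂ f₀ t)
    (hf₁ : ∀ t ∈ U, DifferentiableAt ℂ f₁ t)
    (hf₂ : ∀ t ∈ U, DifferentiableAt ℂ f₂ t)
    (hsum : ∀ t ∈ U, f₀ t + f₁ t + f₂ t = t)
    (heq₀ : ∀ t ∈ U, deriv f₀ t = f₀ t * (f₁ t - f₂ t) + α₀)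
    (heq₁ : ∀ t ∈ U, deriv f₁ t = f₁ t * (f₂ t - f₀ t) + α₁)
    (heq₂ : ∀ t ∈ U, deriv f₂ t = f₂ t * (f₀ t - f₁ t) + α₂)
    (hnz : ∀ t ∈ U, f₂ t ≠ 0) :
    ∀ t ∈ U, deriv (deriv f₂) t =
      (deriv f₂ t) ^ 2 / (2 * f₂ t) + (3/2) * (f₂ t) ^ 3 - 2 * t * (f₂ t) ^ 2
        + (t ^ 2 / 2 + (α₀ - α₁)) * f₂ t - α₂ ^ 2 / (2 * f₂ t) := by
  intro t ht
  have heq₂_near : deriv f₂ =ᶠ[nhds t] fun s => f₂ s * (f₀ s - f₁ s) + α₂ :=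
    Filter.eventuallyEq_of_mem (hU.mem_nhds ht) heq₂
  rw [deriv_deriv_of_eventuallyEq_mul_add_const heq₂_near (hf₂ t ht) ((hf₀ t ht).sub (hf₁ t ht)),
    deriv_fun_sub (hf₀ t ht) (hf₁ t ht), heq₀ t ht, heq₁ t ht, heq₂ t ht]
  exact symmetricPIV_second_deriv_identity α₀ α₁ α₂ _ _ _ t (hsum t ht) (hnz t ht)

/-- If holomorphic `f₀,f₁,f₂` satisfy the symmetric PIV system with constants
`(α₀,α₁,α₂)` on a nonempty open set `U` and `f₂` is nowhere zero, then `f₂`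
satisfies
`f₂'' = (f₂')²/(2f₂) + (3/2)f₂³ − 2t f₂² + (t²/2 + (α₀ − α₁)) f₂ − α₂²/(2f₂)` on `U`. -/
theorem stmt_17 (α₀ α₁ α₂ : ℂ) (U : Set ℂ) (hU : IsOpen U) (hne : U.Nonempty)
    (f₀ f₁ f₂ : ℂ → ℂ)
    (hf₀ : ∀ t ∈ U, DifferentiableAt ℂ f₀ t)
    (hf₁ : ∀ t ∈ U, DifferentiableAt ℂ f₁ t)
    (hf₂ : ∀ t ∈ U, DifferentiableAt ℂ f₂ t)
    (hsum : ∀ t ∈ U, f₀ t + f₁ t + f₂ t = t)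
    (heq₀ : ∀ t ∈ U, deriv f₀ t = f₀ t * (f₁ t - f₂ t) + α₀)
    (heq₁ : ∀ t ∈ U, deriv f₁ t = f₁ t * (f₂ t - f₀ t) + α₁)
    (heq₂ : ∀ t ∈ U, deriv f₂ t = f₂ t * (f₀ t - f₁ t) + α₂)
    (hnz : ∀ t ∈ U, f₂ t ≠ 0) :
    ∀ t ∈ U, deriv (deriv f₂) t =
      (deriv f₂ t) ^ 2 / (2 * f₂ t) + (3/2) * (f₂ t) ^ 3 - 2 * t * (f₂ t) ^ 2
        + (t ^ 2 / 2 + (α₀ - α₁)) * f₂ t - α₂ ^ 2 / (2 * f₂ t) :=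
  stmt_17_general α₀ α₁ α₂ U hU f₀ f₁ f₂ hf₀ hf₁ hf₂ hsum heq₀ heq₁ heq₂ hnz
end
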